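/- Let 𝓕 be a family of meromorphic functions on the unit disk 𝔻 and let a and b be two distinct holomorphic functions on 𝔻. Suppose that for every f ∈ 𝓕 and every z ∈ 𝔻, f(z) ≠ a(z) and f(z) ≠ b(z). If 𝓕 is normal in 𝔻 \ {0}, then 𝓕 is normal in 𝔻. -/

import Mathlib

open OnePoint Metric Filter Complex Set

noncomputable section

/-- The finite part of a point of the Riemann sphere `ℂ ∪ {∞}` (junk value `0` at `∞`). -/
def sphToC (p : OnePoint ℂ) : ℂ := Option.elim p 0 id

open Classical in
/-- Inversion `w ↦ 1/w` on the Riemann sphere `ℂ ∪ {∞}`. -/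
def sphInv (p : OnePoint ℂ) : OnePoint ℂ :=
  if p = ∞ then ((0 : ℂ) : OnePoint ℂ)
  else if sphToC p = 0 then ∞ else (((sphToC p)⁻¹ : ℂ) : OnePoint ℂ)

open Classical in
/-- The spherical (chordal) metric on the Riemann sphere `ℂ ∪ {∞}`. -/
def sphDist (p q : OnePoint ℂ) : ℝ :=
  if p = ∞ then
    (if q = ∞ then 0 else 2 / Real.sqrt (1 + ‖sphToC q‖ ^ 2))
  else if q = ∞ then 2 / Real.sqrt (1 + ‖sphToC p‖ ^ 2)
  else 2 * ‖sphToC p - sphToC q‖ /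
    (Real.sqrt (1 + ‖sphToC p‖ ^ 2) * Real.sqrt (1 + ‖sphToC q‖ ^ 2))

/-- `f : ℂ → ℂ ∪ {∞}` is meromorphic at `z`: near `z` it agrees with an analytic function,
or with the spherical inverse of an analytic function (covering poles and `≡ ∞`). -/
def SphMeromorphicAt (f : ℂ → OnePoint ℂ) (z : ℂ) : Prop :=
  (∃ g : ℂ → ℂ, AnalyticAt ℂ g z ∧ ∀ᶠ w in nhds z, f w = ((g w : ℂ) : OnePoint ℂ)) ∨
  (∃ g : ℂ → ℂ, AnalyticAt ℂ g z ∧ ∀ᶠ w in nhds z, f w = sphInv ((g w : ℂ) : OnePoint ℂ))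

/-- `f` is meromorphic (as a map to the Riemann sphere) on a set `Ω ⊆ ℂ`. -/
def SphMeromorphicOn (f : ℂ → OnePoint ℂ) (Ω : Set ℂ) : Prop :=
  ∀ z ∈ Ω, SphMeromorphicAt f z

/-- Locally uniform (= uniform on compact subsets, for open `Ω`) convergence of a sequence of
sphere-valued functions on `Ω`, with respect to the spherical metric. -/
def SphLocUnifOn (F : ℕ → ℂ → OnePoint ℂ) (g : ℂ → OnePoint ℂ) (Ω : Set ℂ) : Prop :=
  ∀ K : Set ℂ, K ⊆ Ω → IsCompact K → ∀ ε : ℝ, 0 < ε →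
    ∃ N : ℕ, ∀ n ≥ N, ∀ z ∈ K, sphDist (F n z) (g z) < ε

/-- A family `𝓕` of sphere-valued functions is normal on `Ω`: every sequence in `𝓕` has a
subsequence converging locally uniformly on `Ω` (spherical metric) to a meromorphic function
or to the constant `∞`. -/
def SphNormalOn (𝓕 : Set (ℂ → OnePoint ℂ)) (Ω : Set ℂ) : Prop :=
  ∀ F : ℕ → ℂ → OnePoint ℂ, (∀ n, F n ∈ 𝓕) →
    ∃ φ : ℕ → ℕ, StrictMono φ ∧ ∃ g : ℂ → OnePoint ℂ,
      (SphMeromorphicOn g Ω ∨ ∀ z ∈ Ω, g z = ∞) ∧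
      SphLocUnifOn (fun n => F (φ n)) g Ω

/-- A family is normal at a point if it is normal on some open neighbourhood of the point. -/
def SphNormalAt (𝓕 : Set (ℂ → OnePoint ℂ)) (z₀ : ℂ) : Prop :=
  ∃ U : Set ℂ, IsOpen U ∧ z₀ ∈ U ∧ SphNormalOn 𝓕 U

open Classical in
/-- The derivative of a sphere-valued meromorphic function: `∞` at poles (and where `f = ∞`),
and the usual derivative of the finite part elsewhere. -/
def sphDeriv (f : ℂ → OnePoint ℂ) : ℂ → OnePoint ℂ :=
  fun z => if f z = ∞ then ∞ else ((deriv (fun w => sphToC (f w)) z : ℂ) : OnePoint ℂ)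

/-- All zeros of `f` on `Ω` have multiplicity at least `m`: at every zero, the first `m`
derivatives (orders `0, …, m-1`) of the finite part of `f` vanish. -/
def SphZerosMultAtLeast (f : ℂ → OnePoint ℂ) (Ω : Set ℂ) (m : ℕ) : Prop :=
  ∀ z ∈ Ω, f z = ((0 : ℂ) : OnePoint ℂ) →
    ∀ j < m, iteratedDeriv j (fun w => sphToC (f w)) z = 0


/-!
Pass to a subsequence `f n` converging to `h` locally uniformly on the punctured disk; `h` is
meromorphic there (the constant `∞` included). Since `a ≢ b`, `h` differs somewhere from one of
them, `c`; by the identity principle the `c`-points of `h` are then isolated, so some circle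
`‖z‖ = ρ` avoids them. The Möbius maps `p ↦ 1 / (p - c)` and `p ↦ c + 1 / p` are Lipschitz for
the chordal metric, with constant `2 (1 + ‖c‖²)`, so they transport uniform convergence. Since
every `f n` omits `c`, the functions `1 / (f n - c)` are holomorphic on the disk; on the circle
they stay away from `∞` and hence converge uniformly in the Euclidean metric. By the maximum
principle they converge uniformly on the closed disk `‖z‖ ≤ ρ` to a holomorphic `S`, so
`f n → c + 1 / S` there, which is meromorphic and agrees with `h` off the centre.
-/

open Topology

@[simp] lemma sphToC_coe (v : ℂ) : sphToC (v : OnePoint ℂ) = v := rfl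

lemma coe_sphToC {p : OnePoint ℂ} (hp : p ≠ ∞) : (sphToC p : OnePoint ℂ) = p := by
  induction p with
  | infty => exact absurd rfl hp
  | coe v => rfl

@[simp] lemma sphInv_infty : sphInv ∞ = (0 : ℂ) := by simp [sphInv]

@[simp] lemma sphInv_coe_zero : sphInv (0 : ℂ) = ∞ := by simp [sphInv]

lemma sphInv_coe {v : ℂ} (hv : v ≠ 0) : sphInv v = (v⁻¹ : ℂ) := by simp [sphInv, hv]

lemma sphInv_sphInv (p : OnePoint ℂ) : sphInv (sphInv p) = p := by
  induction p with
  | infty => simp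
  | coe v =>
    rcases eq_or_ne v 0 with rfl | hv
    · simp
    · rw [sphInv_coe hv, sphInv_coe (inv_ne_zero hv), inv_inv]

lemma sphInv_coe_eq_coe_iff (u v : ℂ) : sphInv u = v ↔ 1 - v * u = 0 := by
  rcases eq_or_ne u 0 with rfl | hu
  · simp
  · rw [sphInv_coe hu, OnePoint.coe_eq_coe]
    constructor
    · rintro rfl
      rw [inv_mul_cancel₀ hu, sub_self]
    · intro h
      exact (eq_inv_of_mul_eq_one_left (by linear_combination -h)).symm

lemma sphDist_coe_coe (v w : ℂ) :
    sphDist v w = 2 * ‖v - w‖ / (√(1 + ‖v‖ ^ 2) * √(1 + ‖w‖ ^ 2)) := by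
  simp [sphDist]

lemma sphDist_coe_infty (v : ℂ) : sphDist v ∞ = 2 / √(1 + ‖v‖ ^ 2) := by
  simp [sphDist]

lemma sphDist_infty_coe (v : ℂ) : sphDist ∞ v = 2 / √(1 + ‖v‖ ^ 2) := by
  simp [sphDist]

lemma sq_norm_eq_re_sq_add_im_sq (v : ℂ) : ‖v‖ ^ 2 = v.re ^ 2 + v.im ^ 2 := by
  rw [Complex.sq_norm, Complex.normSq_apply]; ring

lemma EuclideanSpace.dist_eq_fin_three (x y : EuclideanSpace ℝ (Fin 3)) :
    dist x y = √((x 0 - y 0) ^ 2 + (x 1 - y 1) ^ 2 + (x 2 - y 2) ^ 2) := by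
  simp [EuclideanSpace.dist_eq, Fin.sum_univ_three, Real.dist_eq, sq_abs, add_assoc]

def inverseStereographic (p : OnePoint ℂ) : EuclideanSpace ℝ (Fin 3) :=
  p.elim !₂[0, 0, 1] fun v => (1 + ‖v‖ ^ 2)⁻¹ • !₂[2 * v.re, 2 * v.im, ‖v‖ ^ 2 - 1]

theorem sphDist_eq_dist_inverseStereographic (p q : OnePoint ℂ) :
    sphDist p q = dist (inverseStereographic p) (inverseStereographic q) := by
  have coe_infty (v : ℂ) :
      sphDist v ∞ = dist (inverseStereographic v) (inverseStereographic ∞) := by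
    rw [EuclideanSpace.dist_eq_fin_three, sphDist_coe_infty]
    simp only [inverseStereographic, OnePoint.elim_infty, OnePoint.elim_some]
    rw [← Real.sqrt_sq (by positivity : 0 ≤ 2 / √(1 + ‖v‖ ^ 2)), div_pow,
      Real.sq_sqrt (by positivity)]
    congr 1
    simp only [PiLp.smul_apply, smul_eq_mul, Matrix.cons_val]
    field_simp
    rw [sq_norm_eq_re_sq_add_im_sq]
    ring
  induction p with
  | infty =>
    induction q with
    | infty => simp [sphDist]
    | coe w => rw [sphDist_infty_coe, ← sphDist_coe_infty, coe_infty, dist_comm]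
  | coe v =>
    induction q with
    | infty => exact coe_infty v
    | coe w =>
      rw [EuclideanSpace.dist_eq_fin_three, sphDist_coe_coe]
      simp only [inverseStereographic, OnePoint.elim_some]
      rw [← Real.sqrt_sq (by positivity : 0 ≤ 2 * ‖v - w‖ / (√(1 + ‖v‖ ^ 2) * √(1 + ‖w‖ ^ 2))),
        div_pow, mul_pow, mul_pow, Real.sq_sqrt (by positivity), Real.sq_sqrt (by positivity)]
      congr 1
      simp only [PiLp.smul_apply, smul_eq_mul, Matrix.cons_val]
      field_simp
      rw [sq_norm_eq_re_sq_add_im_sq, sq_norm_eq_re_sq_add_im_sq v, sq_norm_eq_re_sq_add_im_sq w,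
        Complex.sub_re, Complex.sub_im]
      ring

/-- Inversion is the rotation of the sphere by `π` about the real axis. -/
lemma inverseStereographic_sphInv (p : OnePoint ℂ) :
    inverseStereographic (sphInv p) =
      !₂[inverseStereographic p 0, -inverseStereographic p 1, -inverseStereographic p 2] := by
  induction p with
  | infty => ext i; fin_cases i <;> simp [inverseStereographic]
  | coe v =>
    rcases eq_or_ne v 0 with rfl | hv
    · ext i; fin_cases i <;> simp [inverseStereographic]
    · have hv' : ‖v‖ ≠ 0 := norm_ne_zero_iff.2 hv
      rw [sphInv_coe hv]
      ext i
      fin_cases i <;>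
        simp [inverseStereographic, Complex.inv_re, Complex.inv_im, Complex.normSq_eq_norm_sq] <;>
        field_simp <;> ring

lemma sphDist_sphInv (p q : OnePoint ℂ) : sphDist (sphInv p) (sphInv q) = sphDist p q := by
  simp only [sphDist_eq_dist_inverseStereographic, inverseStereographic_sphInv,
    EuclideanSpace.dist_eq_fin_three, Matrix.cons_val]
  ring_nf

lemma eq_of_sphDist_eq_zero {p q : OnePoint ℂ} (h : sphDist p q = 0) : p = q := by
  induction p with
  | infty =>
    induction q with
    | infty => rfl
    | coe w => rw [sphDist_infty_coe] at h; exact absurd h (by positivity)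
  | coe v =>
    induction q with
    | infty => rw [sphDist_coe_infty] at h; exact absurd h (by positivity)
    | coe w =>
      rw [sphDist_coe_coe, div_eq_zero_iff] at h
      have : v - w = 0 := by simpa [(by positivity : √(1 + ‖v‖ ^ 2) * √(1 + ‖w‖ ^ 2) ≠ 0)] using h
      rw [sub_eq_zero.1 this]

lemma inverseStereographic_injective : Function.Injective inverseStereographic := fun p q h =>
  eq_of_sphDist_eq_zero (by rw [sphDist_eq_dist_inverseStereographic, h, dist_self])

/-- `OnePoint ℂ` with the chordal metric `sphDist`, as a type synonym so that the metric does not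
compete with the topology of the one-point compactification. Lemmas about it take points of
`OnePoint ℂ` and name the synonym through `(α := RiemannSphere)`, so that they apply to the
sphere-valued functions of the statement as they are. -/
def RiemannSphere : Type := OnePoint ℂ

instance : MetricSpace RiemannSphere :=
  MetricSpace.induced inverseStereographic inverseStereographic_injective inferInstance

lemma RiemannSphere.dist_eq (p q : OnePoint ℂ) : dist (α := RiemannSphere) p q = sphDist p q :=
  (sphDist_eq_dist_inverseStereographic p q).symm

lemma sphDist_nonneg (p q : OnePoint ℂ) : 0 ≤ sphDist p q :=
  RiemannSphere.dist_eq p q ▸ dist_nonneg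

lemma sphDist_comm (p q : OnePoint ℂ) : sphDist p q = sphDist q p := by
  simpa only [RiemannSphere.dist_eq] using dist_comm (α := RiemannSphere) p q

lemma sphDist_triangle (p q r : OnePoint ℂ) : sphDist p r ≤ sphDist p q + sphDist q r := by
  simpa only [RiemannSphere.dist_eq] using dist_triangle (α := RiemannSphere) p q r

lemma sphDist_coe_coe_le (v w : ℂ) : sphDist v w ≤ 2 * ‖v - w‖ := by
  rw [sphDist_coe_coe]
  exact div_le_self (by positivity) (one_le_mul_of_one_le_of_one_le
    (Real.one_le_sqrt.2 (by simp)) (Real.one_le_sqrt.2 (by simp)))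

lemma norm_le_of_le_sphDist_infty {v : ℂ} {m : ℝ} (hm : 0 < m) (h : m ≤ sphDist v ∞) :
    ‖v‖ ≤ 2 / m := by
  rw [sphDist_coe_infty, le_div_iff₀ (by positivity)] at h
  rw [le_div_iff₀ hm]
  calc ‖v‖ * m ≤ √(1 + ‖v‖ ^ 2) * m := by
        gcongr; exact Real.le_sqrt_of_sq_le (by linarith)
    _ ≤ 2 := by linarith

lemma norm_sub_le_of_sphDist {v w : ℂ} {M : ℝ} (hv : ‖v‖ ≤ M) (hw : ‖w‖ ≤ M) :
    ‖v - w‖ ≤ (1 + M ^ 2) * sphDist v w := by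
  have hM : √(1 + M ^ 2) * √(1 + M ^ 2) = 1 + M ^ 2 := Real.mul_self_sqrt (by positivity)
  rw [sphDist_coe_coe, ← hM, mul_div, le_div_iff₀ (by positivity)]
  calc ‖v - w‖ * (√(1 + ‖v‖ ^ 2) * √(1 + ‖w‖ ^ 2))
      ≤ ‖v - w‖ * (√(1 + M ^ 2) * √(1 + M ^ 2)) := by gcongr
    _ ≤ _ := by nlinarith [norm_nonneg (v - w), Real.sqrt_nonneg (1 + M ^ 2)]

lemma one_add_sq_norm_le (v c : ℂ) : 1 + ‖v‖ ^ 2 ≤ 2 * (1 + ‖c‖ ^ 2) * (1 + ‖v + c‖ ^ 2) := by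
  have h : ‖v‖ ≤ ‖v + c‖ + ‖c‖ := by simpa using norm_sub_le (v + c) c
  nlinarith [norm_nonneg v, norm_nonneg c, norm_nonneg (v + c), sq_nonneg (‖v + c‖ - ‖c‖),
    mul_nonneg (sq_nonneg ‖c‖) (sq_nonneg ‖v + c‖)]

lemma sphDist_map_add_le (p q : OnePoint ℂ) (c : ℂ) :
    sphDist (p.map (· + c)) (q.map (· + c)) ≤ 2 * (1 + ‖c‖ ^ 2) * sphDist p q := by
  set k := √(2 * (1 + ‖c‖ ^ 2))
  have hk : k * k = 2 * (1 + ‖c‖ ^ 2) := Real.mul_self_sqrt (by positivity)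
  have hk1 : 1 ≤ k := Real.one_le_sqrt.2 (by nlinarith [sq_nonneg ‖c‖])
  have hs (v : ℂ) : √(1 + ‖v‖ ^ 2) ≤ k * √(1 + ‖v + c‖ ^ 2) := by
    rw [← Real.sqrt_mul (by positivity)]; exact Real.sqrt_le_sqrt (one_add_sq_norm_le v c)
  have to_infty (v : ℂ) : 2 / √(1 + ‖v + c‖ ^ 2) ≤ k * k * (2 / √(1 + ‖v‖ ^ 2)) := by
    rw [mul_div_assoc', div_le_div_iff₀ (by positivity) (by positivity)]
    have := mul_le_mul_of_nonneg_right hk1 (by positivity : 0 ≤ k * √(1 + ‖v + c‖ ^ 2))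
    nlinarith [hs v]
  rw [← hk]
  induction p with
  | infty =>
    induction q with
    | infty => simp [sphDist]
    | coe w => simpa [sphDist_infty_coe] using to_infty w
  | coe v =>
    induction q with
    | infty => simpa [sphDist_coe_infty] using to_infty v
    | coe w =>
      simp only [OnePoint.map_some, sphDist_coe_coe, add_sub_add_right_eq_sub]
      rw [mul_div_assoc', div_le_div_iff₀ (by positivity) (by positivity)]
      have := mul_le_mul (hs v) (hs w) (by positivity) (by positivity)
      nlinarith [norm_nonneg (v - w), Real.sqrt_nonneg (1 + ‖v + c‖ ^ 2),
        Real.sqrt_nonneg (1 + ‖w + c‖ ^ 2)]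

def recipSub (c : ℂ) (p : OnePoint ℂ) : OnePoint ℂ := sphInv (p.map (· - c))

def addRecip (c : ℂ) (p : OnePoint ℂ) : OnePoint ℂ := (sphInv p).map (· + c)

lemma addRecip_recipSub (c : ℂ) (p : OnePoint ℂ) : addRecip c (recipSub c p) = p := by
  induction p <;> simp [addRecip, recipSub, sphInv_sphInv]

lemma recipSub_self (c : ℂ) : recipSub c c = ∞ := by simp [recipSub]

lemma addRecip_infty (c : ℂ) : addRecip c ∞ = c := by simp [addRecip]

lemma recipSub_ne_infty {c : ℂ} {p : OnePoint ℂ} (h : p ≠ c) : recipSub c p ≠ ∞ := by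
  rw [Ne, ← recipSub_self c]
  intro h'
  exact h (by simpa [addRecip_recipSub] using congrArg (addRecip c) h')

lemma recipSub_coe {c u : ℂ} (h : u ≠ c) : recipSub c u = ((u - c)⁻¹ : ℂ) := by
  simp [recipSub, sphInv_coe (sub_ne_zero.2 h)]

lemma sphToC_recipSub_sphInv {c u : ℂ} (h : sphInv u ≠ c) :
    sphToC (recipSub c (sphInv u)) = u / (1 - c * u) := by
  rcases eq_or_ne u 0 with rfl | hu
  · simp [recipSub]
  · rw [sphInv_coe hu] at h ⊢
    have h' : u⁻¹ - c ≠ 0 := sub_ne_zero.2 fun e => h (by rw [e])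
    rw [recipSub_coe fun e => h (by rw [e]), sphToC_coe]
    field_simp

lemma addRecip_coe {c u : ℂ} (hu : u ≠ 0) : addRecip c u = (u⁻¹ + c : ℂ) := by
  simp [addRecip, sphInv_coe hu]

lemma addRecip_coe_eq_sphInv {c u : ℂ} (h : 1 + c * u ≠ 0) :
    addRecip c u = sphInv (u / (1 + c * u) : ℂ) := by
  rcases eq_or_ne u 0 with rfl | hu
  · simp [addRecip]
  · rw [addRecip_coe hu, sphInv_coe (div_ne_zero hu h)]
    congr 1
    field_simp

lemma sphDist_recipSub_le (c : ℂ) (p q : OnePoint ℂ) :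
    sphDist (recipSub c p) (recipSub c q) ≤ 2 * (1 + ‖c‖ ^ 2) * sphDist p q := by
  simpa [recipSub, sphDist_sphInv, sub_eq_add_neg] using sphDist_map_add_le p q (-c)

lemma sphDist_addRecip_le (c : ℂ) (p q : OnePoint ℂ) :
    sphDist (addRecip c p) (addRecip c q) ≤ 2 * (1 + ‖c‖ ^ 2) * sphDist p q := by
  simpa [addRecip, sphDist_sphInv] using sphDist_map_add_le (sphInv p) (sphInv q) c

namespace RiemannSphere

lemma lipschitzWith_of_sphDist_le {T : OnePoint ℂ → OnePoint ℂ} {L : NNReal}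
    (hT : ∀ p q, sphDist (T p) (T q) ≤ L * sphDist p q) :
    LipschitzWith (α := RiemannSphere) (β := RiemannSphere) L T :=
  LipschitzWith.of_dist_le_mul fun (p q : OnePoint ℂ) => by
    simpa only [dist_eq] using hT p q

lemma lipschitzWith_coe : LipschitzWith (β := RiemannSphere) 2 (fun v : ℂ => (v : OnePoint ℂ)) :=
  LipschitzWith.of_dist_le_mul fun v w =>
    (dist_eq _ _).trans_le (by rw [dist_eq_norm]; exact_mod_cast sphDist_coe_coe_le v w)

lemma isometry_sphInv : Isometry (α := RiemannSphere) (β := RiemannSphere) sphInv :=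
  Isometry.of_dist_eq fun p q => (dist_eq _ _).trans ((sphDist_sphInv p q).trans (dist_eq _ _).symm)

lemma lipschitzWith_recipSub {c : ℂ} {L : NNReal} (hL : 2 * (1 + ‖c‖ ^ 2) ≤ L) :
    LipschitzWith (α := RiemannSphere) (β := RiemannSphere) L (recipSub c) :=
  lipschitzWith_of_sphDist_le fun p q =>
    (sphDist_recipSub_le c p q).trans (by gcongr; exact sphDist_nonneg p q)

lemma lipschitzWith_addRecip {c : ℂ} {L : NNReal} (hL : 2 * (1 + ‖c‖ ^ 2) ≤ L) :
    LipschitzWith (α := RiemannSphere) (β := RiemannSphere) L (addRecip c) :=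
  lipschitzWith_of_sphDist_le fun p q =>
    (sphDist_addRecip_le c p q).trans (by gcongr; exact sphDist_nonneg p q)

theorem tendstoUniformlyOn_of_tendstoUniformlyOn_coe {ι α : Type*} {p : Filter ι}
    {s : ι → α → ℂ} {σ : α → ℂ} {K : Set α} {m : ℝ} (hm : 0 < m)
    (hσ : ∀ x ∈ K, m ≤ sphDist (σ x) ∞)
    (h : TendstoUniformlyOn (β := RiemannSphere) (fun n x => (s n x : OnePoint ℂ))
      (fun x => (σ x : OnePoint ℂ)) p K) :
    TendstoUniformlyOn s σ p K := by
  set M := 4 / m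
  rw [Metric.tendstoUniformlyOn_iff]
  intro ε hε
  filter_upwards [Metric.tendstoUniformlyOn_iff.1 h (min (m / 2) (ε / (1 + M ^ 2)))
    (by positivity)] with n hn x hx
  have hd := hn x hx
  rw [dist_eq, lt_min_iff] at hd
  have hσM : ‖σ x‖ ≤ M :=
    (norm_le_of_le_sphDist_infty hm (hσ x hx)).trans (by unfold M; gcongr; norm_num)
  have hsM : ‖s n x‖ ≤ M := by
    refine (norm_le_of_le_sphDist_infty (half_pos hm) ?_).trans_eq (by ring)
    linarith [hσ x hx, sphDist_triangle (σ x) (s n x) ∞]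
  rw [dist_eq_norm]
  calc ‖σ x - s n x‖ ≤ (1 + M ^ 2) * sphDist (σ x) (s n x) := norm_sub_le_of_sphDist hσM hsM
    _ < (1 + M ^ 2) * (ε / (1 + M ^ 2)) := by gcongr; exact hd.2
    _ = ε := by field_simp

end RiemannSphere

theorem sphLocUnifOn_iff {F : ℕ → ℂ → OnePoint ℂ} {g : ℂ → OnePoint ℂ} {Ω : Set ℂ}
    (hΩ : IsOpen Ω) :
    SphLocUnifOn F g Ω ↔ TendstoLocallyUniformlyOn (β := RiemannSphere) F g atTop Ω := by
  refine Iff.symm <| (tendstoLocallyUniformlyOn_iff_forall_isCompact hΩ).trans <|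
    forall₃_congr fun K _ _ => Metric.tendstoUniformlyOn_iff.trans ?_
  simp only [eventually_atTop, RiemannSphere.dist_eq, sphDist_comm (g _)]

theorem TendstoUniformlyOn.comp_lipschitzWith {ι α β γ : Type*} [PseudoMetricSpace β]
    [PseudoMetricSpace γ] {F : ι → α → β} {f : α → β} {p : Filter ι} {s : Set α}
    (h : TendstoUniformlyOn F f p s) {T : α → β → γ} {L : NNReal}
    (hT : ∀ x ∈ s, LipschitzWith L (T x)) :
    TendstoUniformlyOn (fun i x => T x (F i x)) (fun x => T x (f x)) p s := by
  rw [Metric.tendstoUniformlyOn_iff] at h ⊢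
  intro ε hε
  filter_upwards [h (ε / (L + 1)) (by positivity)] with i hi x hx
  calc dist (T x (f x)) (T x (F i x)) ≤ L * dist (f x) (F i x) := (hT x hx).dist_le_mul _ _
    _ ≤ L * (ε / (L + 1)) := by gcongr; exact (hi x hx).le
    _ < ε := by rw [mul_div_assoc', div_lt_iff₀ (by positivity)]; nlinarith

section Update

variable {ι α β : Type*} [TopologicalSpace α] [UniformSpace β] [T2Space β] {p : Filter ι}
  [p.NeBot] {F : ι → α → β}

lemma TendstoLocallyUniformlyOn.eqOn_inter {f g : α → β} {s t : Set α}
    (hf : TendstoLocallyUniformlyOn F f p s) (hg : TendstoLocallyUniformlyOn F g p t) :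
    EqOn f g (s ∩ t) := fun _ hx => tendsto_nhds_unique (hf.tendsto_at hx.1) (hg.tendsto_at hx.2)

theorem TendstoLocallyUniformlyOn.update [T1Space α] [DecidableEq α] {h G : α → β}
    {Ω U : Set α} {z₀ : α} (hΩ : IsOpen Ω) (hU : IsOpen U) (hUΩ : U ⊆ Ω) (hz₀ : z₀ ∈ U)
    (hh : TendstoLocallyUniformlyOn F h p (Ω \ {z₀})) (hG : TendstoLocallyUniformlyOn F G p U) :
    TendstoLocallyUniformlyOn F (Function.update h z₀ (G z₀)) p Ω := by
  have hGh := hG.eqOn_inter hh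
  rw [← union_sdiff_cancel' (singleton_subset_iff.2 hz₀) hUΩ]
  refine .union hU (hΩ.sdiff isClosed_singleton) (hG.congr_right fun z hz => ?_)
    (hh.congr_right fun z hz => (Function.update_of_ne hz.2 _ _).symm)
  rcases eq_or_ne z z₀ with rfl | hne
  · exact (Function.update_self z (G z) h).symm
  · rw [Function.update_of_ne hne, hGh ⟨hz, hUΩ hz, hne⟩]

end Update

theorem exists_tendstoUniformlyOn_closure_of_frontier {E : Type*} [NormedAddCommGroup E]
    [NormedSpace ℂ E] [CompleteSpace E] {s : ℕ → ℂ → E} {σ : ℂ → E} {U : Set ℂ}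
    (hU : IsOpen U) (hUb : Bornology.IsBounded U) (hs : ∀ n, DiffContOnCl ℂ (s n) U)
    (hσ : TendstoUniformlyOn s σ atTop (frontier U)) :
    ∃ S : ℂ → E, DifferentiableOn ℂ S U ∧ TendstoUniformlyOn s S atTop (closure U) := by
  have hcauchy : UniformCauchySeqOn s atTop (closure U) := by
    rw [Metric.uniformCauchySeqOn_iff]
    intro ε hε
    obtain ⟨N, hN⟩ := Metric.uniformCauchySeqOn_iff.1 hσ.uniformCauchySeqOn (ε / 2) (by positivity)
    refine ⟨N, fun m hm n hn z hz => ?_⟩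
    rw [dist_eq_norm]
    calc ‖s m z - s n z‖ ≤ ε / 2 :=
          Complex.norm_le_of_forall_mem_frontier_norm_le hUb ((hs m).sub (hs n))
            (fun w hw => (dist_eq_norm (s m w) (s n w) ▸ hN m hm n hn w hw).le) hz
      _ < ε := by linarith
  have hlim : TendstoUniformlyOn s (fun z => limUnder atTop fun n => s n z) atTop (closure U) :=
    hcauchy.tendstoUniformlyOn_of_tendsto fun z hz => (hcauchy.cauchySeq hz).tendsto_limUnder
  exact ⟨_, (hlim.mono subset_closure).tendstoLocallyUniformlyOn.differentiableOn
    (Eventually.of_forall fun n => (hs n).differentiableOn) hU, hlim⟩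

lemma Set.EqOn.of_diff_singleton {E : Type*} [TopologicalSpace E] [T2Space E] {a b : ℂ → E}
    {Ω : Set ℂ} {z₀ : ℂ} (hΩ : IsOpen Ω)
    (ha : ContinuousOn a Ω) (hb : ContinuousOn b Ω) (hab : EqOn a b (Ω \ {z₀})) : EqOn a b Ω :=
  hab.of_subset_closure ha hb sdiff_subset fun z hz =>
    hΩ.inter_closure ⟨hz, show z ∈ closure {z₀}ᶜ by rw [closure_compl_singleton]; trivial⟩

theorem isPreconnected_ball_diff_center (z₀ : ℂ) (r : ℝ) : IsPreconnected (ball z₀ r \ {z₀}) := by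
  rcases le_or_gt r 0 with hr | hr
  · simp [ball_eq_empty.2 hr, isPreconnected_empty]
  have : ball z₀ r \ {z₀} = (fun w => z₀ + Complex.exp w) '' {w | w.re < Real.log r} := by
    ext z
    simp only [Set.mem_sdiff, mem_ball, mem_singleton_iff, mem_image, mem_ofPred_eq]
    constructor
    · rintro ⟨hz, hne⟩
      have hne' : z - z₀ ≠ 0 := sub_ne_zero.2 hne
      refine ⟨Complex.log (z - z₀), ?_, by rw [Complex.exp_log hne', add_sub_cancel]⟩
      rw [Complex.log_re, ← dist_eq_norm]
      exact Real.log_lt_log (dist_pos.2 hne) hz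
    · rintro ⟨w, hw, rfl⟩
      refine ⟨?_, by simp [Complex.exp_ne_zero]⟩
      rw [dist_eq_norm, add_sub_cancel_left, Complex.norm_exp]
      exact (Real.lt_log_iff_exp_lt hr).1 hw
  rw [this]
  exact (convex_halfSpace_re_lt _).isPreconnected.image _ (by fun_prop)

namespace SphMeromorphicAt

variable {f h : ℂ → OnePoint ℂ} {c : ℂ → ℂ} {z : ℂ}

lemma congr (hh : SphMeromorphicAt h z) (he : f =ᶠ[𝓝 z] h) : SphMeromorphicAt f z := by
  rcases hh with ⟨g, hg, hgh⟩ | ⟨g, hg, hgh⟩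
  · exact Or.inl ⟨g, hg, he.trans hgh⟩
  · exact Or.inr ⟨g, hg, he.trans hgh⟩

lemma continuousAt (hh : SphMeromorphicAt h z) : @ContinuousAt ℂ RiemannSphere _ _ h z := by
  rcases hh with ⟨g, hg, hgh⟩ | ⟨g, hg, hgh⟩
  · exact (RiemannSphere.lipschitzWith_coe.continuous.continuousAt.comp hg.continuousAt).congr
      (hgh.mono fun w hw => hw.symm)
  · exact ((RiemannSphere.isometry_sphInv.continuous.comp
      RiemannSphere.lipschitzWith_coe.continuous).continuousAt.comp hg.continuousAt).congr
      (hgh.mono fun w hw => hw.symm)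

lemma exists_analyticAt_eq_iff (hh : SphMeromorphicAt h z) (hc : AnalyticAt ℂ c z) :
    ∃ φ : ℂ → ℂ, AnalyticAt ℂ φ z ∧ ∀ᶠ w in 𝓝 z, (h w = c w ↔ φ w = 0) := by
  rcases hh with ⟨g, hg, hgh⟩ | ⟨g, hg, hgh⟩
  · refine ⟨g - c, hg.sub hc, hgh.mono fun w hw => ?_⟩
    rw [hw, OnePoint.coe_eq_coe, Pi.sub_apply, sub_eq_zero]
  · refine ⟨fun w => 1 - c w * g w, analyticAt_const.sub (hc.mul hg), hgh.mono fun w hw => ?_⟩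
    rw [hw, sphInv_coe_eq_coe_iff]

lemma eventually_eq_of_frequently_eq (hh : SphMeromorphicAt h z) (hc : AnalyticAt ℂ c z)
    (hfreq : ∃ᶠ w in 𝓝[≠] z, h w = c w) : ∀ᶠ w in 𝓝 z, h w = c w := by
  obtain ⟨φ, hφ, hφh⟩ := hh.exists_analyticAt_eq_iff hc
  have : ∃ᶠ w in 𝓝[≠] z, φ w = 0 :=
    (hfreq.and_eventually (nhdsWithin_le_nhds hφh)).mono fun w hw => hw.2.1 hw.1
  filter_upwards [hφ.frequently_zero_iff_eventually_zero.1 this, hφh] with w hw hwh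
  exact hwh.2 hw

lemma analyticAt_sphToC_recipSub (hf : SphMeromorphicAt f z) (hc : AnalyticAt ℂ c z)
    (hfc : ∀ᶠ w in 𝓝 z, f w ≠ c w) :
    AnalyticAt ℂ (fun w => sphToC (recipSub (c w) (f w))) z := by
  rcases hf with ⟨g, hg, hgf⟩ | ⟨g, hg, hgf⟩
  · have hne (w) (hfw : f w = g w) (hw : f w ≠ c w) : g w ≠ c w := fun e => hw (by rw [hfw, e])
    refine ((hg.sub hc).inv (sub_ne_zero.2 (hne z hgf.self_of_nhds hfc.self_of_nhds))).congr ?_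
    filter_upwards [hgf, hfc] with w hfw hw
    rw [hfw, recipSub_coe (hne w hfw hw), sphToC_coe, Pi.inv_apply, Pi.sub_apply]
  · have hne : 1 - c z * g z ≠ 0 := by
      rw [Ne, ← sphInv_coe_eq_coe_iff, ← hgf.self_of_nhds]; exact hfc.self_of_nhds
    refine (hg.div (analyticAt_const.sub (hc.mul hg)) hne).congr ?_
    filter_upwards [hgf, hfc] with w hfw hw
    rw [hfw] at hw ⊢
    exact (sphToC_recipSub_sphInv hw).symm

end SphMeromorphicAt

lemma sphMeromorphicAt_addRecip {S c : ℂ → ℂ} {z : ℂ} (hS : AnalyticAt ℂ S z)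
    (hc : AnalyticAt ℂ c z) : SphMeromorphicAt (fun w => addRecip (c w) (S w)) z := by
  rcases eq_or_ne (S z) 0 with hS0 | hS0
  · have hden : AnalyticAt ℂ (fun w => 1 + c w * S w) z := analyticAt_const.add (hc.mul hS)
    have hden0 : 1 + c z * S z ≠ 0 := by simp [hS0]
    refine Or.inr ⟨fun w => S w / (1 + c w * S w), hS.div hden hden0, ?_⟩
    filter_upwards [hden.continuousAt.eventually_ne hden0] with w hw
    exact addRecip_coe_eq_sphInv hw
  · refine Or.inl ⟨fun w => (S w)⁻¹ + c w, (hS.inv hS0).add hc, ?_⟩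
    filter_upwards [hS.continuousAt.eventually_ne hS0] with w hw
    exact addRecip_coe hw

lemma sphMeromorphicOn_of_forall_eq_infty {g : ℂ → OnePoint ℂ} {Ω : Set ℂ} (hΩ : IsOpen Ω)
    (hg : ∀ z ∈ Ω, g z = ∞) : SphMeromorphicOn g Ω := fun z hz =>
  Or.inr ⟨fun _ => 0, analyticAt_const,
    eventually_of_mem (hΩ.mem_nhds hz) fun w hw => by simp [hg w hw]⟩

theorem SphMeromorphicOn.update {h G : ℂ → OnePoint ℂ} {Ω : Set ℂ} {z₀ : ℂ}
    (hh : SphMeromorphicOn h (Ω \ {z₀})) (hG : SphMeromorphicAt G z₀)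
    (hGh : ∀ᶠ z in 𝓝[≠] z₀, G z = h z) : SphMeromorphicOn (Function.update h z₀ (G z₀)) Ω := by
  intro z hz
  rcases eq_or_ne z z₀ with rfl | hne
  · refine hG.congr ?_
    filter_upwards [eventually_nhdsWithin_iff.1 hGh] with w hw
    rcases eq_or_ne w z with rfl | hwz
    · exact Function.update_self _ _ _
    · rw [Function.update_of_ne hwz, hw hwz]
  · refine (hh z ⟨hz, hne⟩).congr ?_
    filter_upwards [isOpen_compl_singleton.mem_nhds hne] with w hw
    exact Function.update_of_ne hw _ _

theorem SphMeromorphicOn.eqOn_of_frequently_eq {h : ℂ → OnePoint ℂ} {c : ℂ → ℂ} {U : Set ℂ}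
    (hU : IsPreconnected U) (hh : SphMeromorphicOn h U) (hc : AnalyticOnNhd ℂ c U)
    {z₀ : ℂ} (hz₀ : z₀ ∈ U) (hfreq : ∃ᶠ w in 𝓝[≠] z₀, h w = c w) : ∀ z ∈ U, h z = c z := by
  set u := {z | ∀ᶠ w in 𝓝 z, h w = c w}
  have closed : closure u ∩ U ⊆ u := by
    rintro z ⟨hzu, hz⟩
    by_contra hzu'
    refine hzu' ((hh z hz).eventually_eq_of_frequently_eq (hc z hz) ?_)
    rw [frequently_nhdsWithin_iff]
    exact (mem_closure_iff_frequently.1 hzu).mono fun w hw =>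
      ⟨hw.self_of_nhds, fun e => hzu' (by rwa [← mem_singleton_iff.1 e])⟩
  have hU_sub := hU.subset_of_closure_inter_subset isOpen_setOfPred_eventually_nhds
    ⟨z₀, hz₀, (hh z₀ hz₀).eventually_eq_of_frequently_eq (hc z₀ hz₀) hfreq⟩ closed
  exact fun z hz => (hU_sub hz).self_of_nhds

theorem exists_sphere_forall_ne {h : ℂ → OnePoint ℂ} {c : ℂ → ℂ} {Ω : Set ℂ} {z₀ : ℂ}
    (hΩ : IsOpen Ω) (hΩ' : IsPreconnected (Ω \ {z₀})) (hz₀ : z₀ ∈ Ω)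
    (hh : SphMeromorphicOn h (Ω \ {z₀})) (hc : AnalyticOnNhd ℂ c Ω)
    (hhc : ∃ z ∈ Ω \ {z₀}, h z ≠ c z) :
    ∃ ρ > 0, closedBall z₀ ρ ⊆ Ω ∧ ∀ z ∈ sphere z₀ ρ, h z ≠ c z := by
  obtain ⟨r, hr, hrΩ⟩ := nhds_basis_closedBall.mem_iff.1 (hΩ.mem_nhds hz₀)
  set A := closedBall z₀ r \ ball z₀ (r / 2)
  have hA : A ⊆ Ω \ {z₀} := fun z hz =>
    ⟨hrΩ hz.1, fun e => hz.2 (by rw [mem_singleton_iff.1 e]; exact mem_ball_self (by positivity))⟩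
  set E := {z ∈ A | h z = c z}
  have hE : E.Finite := by
    by_contra hE
    obtain ⟨z, hzA, hacc⟩ := Set.Infinite.exists_accPt_of_subset_isCompact hE
      ((isCompact_closedBall _ _).diff isOpen_ball) (sep_subset _ _)
    obtain ⟨w, hw, hne⟩ := hhc
    exact hne (hh.eqOn_of_frequently_eq hΩ' (hc.mono sdiff_subset) (hA hzA)
      (accPt_iff_frequently_nhdsNE.1 hacc |>.mono fun w hw => hw.2) w hw)
  obtain ⟨ρ, ⟨hρr, hρ⟩, hρE⟩ :=
    ((Icc_infinite (by linarith : r / 2 < r)).sdiff (hE.image (dist · z₀))).nonempty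
  refine ⟨ρ, by linarith, (closedBall_subset_closedBall hρ).trans hrΩ, fun z hz hzc => hρE ?_⟩
  rw [mem_sphere] at hz
  exact ⟨z, ⟨⟨mem_closedBall.2 (hz ▸ hρ), fun hzb => (mem_ball.1 hzb).not_ge (hz ▸ hρr)⟩, hzc⟩, hz⟩

lemma exists_lipschitz_const_bound {c : ℂ → ℂ} {K : Set ℂ} (hK : IsCompact K)
    (hc : ContinuousOn c K) : ∃ L : NNReal, 0 < L ∧ ∀ z ∈ K, 2 * (1 + ‖c z‖ ^ 2) ≤ L := by
  obtain ⟨B, hB⟩ := hK.exists_bound_of_continuousOn hc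
  refine ⟨(2 * (1 + B ^ 2)).toNNReal, by simp; positivity, fun z hz => ?_⟩
  rw [Real.coe_toNNReal _ (by positivity)]
  gcongr
  exact hB z hz

theorem tendstoUniformlyOn_sphToC_recipSub {f : ℕ → ℂ → OnePoint ℂ} {h : ℂ → OnePoint ℂ}
    {c : ℂ → ℂ} {K : Set ℂ} (hK : IsCompact K) (hh : ∀ z ∈ K, SphMeromorphicAt h z)
    (hc : ContinuousOn c K) (hfc : ∀ n, ∀ z ∈ K, f n z ≠ c z) (hhc : ∀ z ∈ K, h z ≠ c z)
    (hconv : TendstoUniformlyOn (β := RiemannSphere) f h atTop K) :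
    TendstoUniformlyOn (fun n z => sphToC (recipSub (c z) (f n z)))
      (fun z => sphToC (recipSub (c z) (h z))) atTop K := by
  obtain ⟨L, hL0, hL⟩ := exists_lipschitz_const_bound hK hc
  have hcont : ContinuousOn (fun z => dist (α := RiemannSphere) (h z) (c z : OnePoint ℂ)) K :=
    fun z hz => (hh z hz).continuousAt.continuousWithinAt.dist
      (RiemannSphere.lipschitzWith_coe.continuous.continuousAt.comp_continuousWithinAt (hc z hz))
  obtain ⟨m, hm, hmK⟩ := hK.exists_forall_le' hcont fun z hz => dist_pos.2 (hhc z hz)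
  simp only [RiemannSphere.dist_eq] at hmK
  have hrecip : TendstoUniformlyOn (β := RiemannSphere) (fun n z => recipSub (c z) (f n z))
      (fun z => recipSub (c z) (h z)) atTop K :=
    hconv.comp_lipschitzWith fun z hz => RiemannSphere.lipschitzWith_recipSub (hL z hz)
  have coe_eq {p : OnePoint ℂ} {z : ℂ} (hp : p ≠ c z) :
      (sphToC (recipSub (c z) p) : OnePoint ℂ) = recipSub (c z) p :=
    coe_sphToC (recipSub_ne_infty hp)
  refine RiemannSphere.tendstoUniformlyOn_of_tendstoUniformlyOn_coe (m := m / L) (by positivity)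
    (fun z hz => ?_) ((hrecip.congr (.of_forall fun n z hz => (coe_eq (hfc n z hz)).symm))
      |>.congr_right fun z hz => (coe_eq (hhc z hz)).symm)
  rw [coe_eq (hhc z hz), div_le_iff₀ (by positivity), mul_comm]
  calc m ≤ sphDist (h z) (c z) := hmK z hz
    _ = sphDist (addRecip (c z) (recipSub (c z) (h z))) (addRecip (c z) ∞) := by
      rw [addRecip_recipSub, addRecip_infty]
    _ ≤ L * sphDist (recipSub (c z) (h z)) ∞ := by
      simpa only [RiemannSphere.dist_eq] using
        (RiemannSphere.lipschitzWith_addRecip (hL z hz)).dist_le_mul (recipSub (c z) (h z)) ∞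

theorem exists_tendstoUniformlyOn_closedBall_addRecip {f : ℕ → ℂ → OnePoint ℂ}
    {h : ℂ → OnePoint ℂ} {c : ℂ → ℂ} {Ω : Set ℂ} {z₀ : ℂ} {ρ : ℝ} (hΩ : IsOpen Ω) (hρ : 0 < ρ)
    (hρΩ : closedBall z₀ ρ ⊆ Ω) (hf : ∀ n, SphMeromorphicOn (f n) Ω) (hc : AnalyticOnNhd ℂ c Ω)
    (hfc : ∀ n, ∀ z ∈ Ω, f n z ≠ c z) (hh : ∀ z ∈ sphere z₀ ρ, SphMeromorphicAt h z)
    (hhc : ∀ z ∈ sphere z₀ ρ, h z ≠ c z)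
    (hconv : TendstoUniformlyOn (β := RiemannSphere) f h atTop (sphere z₀ ρ)) :
    ∃ S : ℂ → ℂ, DifferentiableOn ℂ S (ball z₀ ρ) ∧
      TendstoUniformlyOn (β := RiemannSphere) f (fun z => addRecip (c z) (S z)) atTop
        (closedBall z₀ ρ) := by
  have hcK : ContinuousOn c (closedBall z₀ ρ) := fun z hz =>
    (hc z (hρΩ hz)).continuousAt.continuousWithinAt
  obtain ⟨L, -, hL⟩ := exists_lipschitz_const_bound (isCompact_closedBall z₀ ρ) hcK
  have hs (n : ℕ) : DiffContOnCl ℂ (fun z => sphToC (recipSub (c z) (f n z))) (ball z₀ ρ) := by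
    refine DifferentiableOn.diffContOnCl fun z hz => ?_
    rw [closure_ball z₀ hρ.ne'] at hz
    have hzΩ := hρΩ hz
    exact ((hf n z hzΩ).analyticAt_sphToC_recipSub (hc z hzΩ)
      (eventually_of_mem (hΩ.mem_nhds hzΩ) (hfc n))).differentiableAt.differentiableWithinAt
  have hsph := tendstoUniformlyOn_sphToC_recipSub (isCompact_sphere z₀ ρ) hh
    (hcK.mono sphere_subset_closedBall)
    (fun n z hz => hfc n z (hρΩ (sphere_subset_closedBall hz))) hhc hconv
  obtain ⟨S, hSd, hS⟩ := exists_tendstoUniformlyOn_closure_of_frontier isOpen_ball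
    isBounded_ball hs (by rwa [frontier_ball z₀ hρ.ne'])
  rw [closure_ball z₀ hρ.ne'] at hS
  refine ⟨S, hSd, ((RiemannSphere.lipschitzWith_coe.uniformContinuous.comp_tendstoUniformlyOn
    hS).comp_lipschitzWith fun z hz => RiemannSphere.lipschitzWith_addRecip (hL z hz)).congr
    (.of_forall fun n z hz => ?_)⟩
  show addRecip (c z) (sphToC (recipSub (c z) (f n z))) = f n z
  rw [coe_sphToC (recipSub_ne_infty (hfc n z (hρΩ hz))), addRecip_recipSub]

theorem exists_sphMeromorphicOn_tendstoLocallyUniformlyOn {f : ℕ → ℂ → OnePoint ℂ}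
    {h : ℂ → OnePoint ℂ} {c : ℂ → ℂ} {Ω : Set ℂ} {z₀ : ℂ} {ρ : ℝ} (hΩ : IsOpen Ω) (hρ : 0 < ρ)
    (hρΩ : closedBall z₀ ρ ⊆ Ω) (hf : ∀ n, SphMeromorphicOn (f n) Ω) (hc : AnalyticOnNhd ℂ c Ω)
    (hfc : ∀ n, ∀ z ∈ Ω, f n z ≠ c z) (hh : SphMeromorphicOn h (Ω \ {z₀}))
    (hhc : ∀ z ∈ sphere z₀ ρ, h z ≠ c z)
    (hconv : TendstoLocallyUniformlyOn (β := RiemannSphere) f h atTop (Ω \ {z₀})) :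
    ∃ g, SphMeromorphicOn g Ω ∧ TendstoLocallyUniformlyOn (β := RiemannSphere) f g atTop Ω := by
  have hsph : sphere z₀ ρ ⊆ Ω \ {z₀} := fun z hz =>
    ⟨hρΩ (sphere_subset_closedBall hz), fun e => hρ.ne (by simpa [mem_singleton_iff.1 e] using hz)⟩
  obtain ⟨S, hSd, hS⟩ := exists_tendstoUniformlyOn_closedBall_addRecip hΩ hρ hρΩ hf hc hfc
    (fun z hz => hh z (hsph hz)) hhc
    ((tendstoLocallyUniformlyOn_iff_forall_isCompact (hΩ.sdiff isClosed_singleton)).1 hconv _ hsph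
      (isCompact_sphere z₀ ρ))
  set G := fun z => addRecip (c z) (S z)
  have hG : TendstoLocallyUniformlyOn (β := RiemannSphere) f G atTop (ball z₀ ρ) :=
    (hS.mono ball_subset_closedBall).tendstoLocallyUniformlyOn
  have hball := ball_mem_nhds z₀ hρ
  refine ⟨Function.update h z₀ (G z₀), hh.update (sphMeromorphicAt_addRecip
    (hSd.analyticAt hball) (hc z₀ (hρΩ (mem_closedBall_self hρ.le)))) ?_,
    hconv.update hΩ isOpen_ball (ball_subset_closedBall.trans hρΩ) (mem_ball_self hρ) hG⟩
  filter_upwards [inter_mem_nhdsWithin {z₀}ᶜ hball] with z hz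
  exact hG.eqOn_inter hconv ⟨hz.2, hρΩ (ball_subset_closedBall hz.2), hz.1⟩

theorem sphNormalOn_of_sphNormalOn_diff_singleton {𝓕 : Set (ℂ → OnePoint ℂ)} {Ω : Set ℂ}
    {z₀ : ℂ} (hΩ : IsOpen Ω) (hΩ' : IsPreconnected (Ω \ {z₀})) (hz₀ : z₀ ∈ Ω)
    (h𝓕 : ∀ f ∈ 𝓕, SphMeromorphicOn f Ω) {a b : ℂ → ℂ} (ha : AnalyticOnNhd ℂ a Ω)
    (hb : AnalyticOnNhd ℂ b Ω) (hab : ¬ EqOn a b Ω)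
    (havoid : ∀ f ∈ 𝓕, ∀ z ∈ Ω, f z ≠ a z ∧ f z ≠ b z) (hnorm : SphNormalOn 𝓕 (Ω \ {z₀})) :
    SphNormalOn 𝓕 Ω := by
  have hΩ₀ : IsOpen (Ω \ {z₀}) := hΩ.sdiff isClosed_singleton
  intro F hF
  obtain ⟨φ, hφ, h, hh, hconv⟩ := hnorm F hF
  replace hh : SphMeromorphicOn h (Ω \ {z₀}) :=
    hh.elim id (sphMeromorphicOn_of_forall_eq_infty hΩ₀)
  obtain ⟨c, hc, hFc, hhc⟩ : ∃ c : ℂ → ℂ, AnalyticOnNhd ℂ c Ω ∧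
      (∀ n, ∀ z ∈ Ω, F (φ n) z ≠ c z) ∧ ∃ z ∈ Ω \ {z₀}, h z ≠ c z := by
    by_cases hha : ∃ z ∈ Ω \ {z₀}, h z ≠ a z
    · exact ⟨a, ha, fun n z hz => (havoid _ (hF (φ n)) z hz).1, hha⟩
    refine ⟨b, hb, fun n z hz => (havoid _ (hF (φ n)) z hz).2, ?_⟩
    by_contra! hhb
    push Not at hha
    exact hab (EqOn.of_diff_singleton (z₀ := z₀) hΩ ha.continuousOn hb.continuousOn fun z hz =>
      OnePoint.coe_injective ((hha z hz).symm.trans (hhb z hz)))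
  obtain ⟨ρ, hρ, hρΩ, hsph⟩ := exists_sphere_forall_ne hΩ hΩ' hz₀ hh hc hhc
  obtain ⟨g, hg, hgconv⟩ := exists_sphMeromorphicOn_tendstoLocallyUniformlyOn hΩ hρ hρΩ
    (fun n => h𝓕 _ (hF (φ n))) hc hFc hh hsph ((sphLocUnifOn_iff hΩ₀).1 hconv)
  exact ⟨φ, hφ, g, Or.inl hg, (sphLocUnifOn_iff hΩ).2 hgconv⟩

/-- **Lemma (Chang–Fang–Zalcman).** Let `𝓕` be a family of meromorphic functions on the unit
disk `𝔻` and let `a, b` be two distinct holomorphic functions on `𝔻` such that every `f ∈ 𝓕`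
satisfies `f z ≠ a z` and `f z ≠ b z` on `𝔻`. If `𝓕` is normal in `𝔻 \ {0}`, then `𝓕` is
normal in `𝔻`. -/
theorem normal_on_disk_of_normal_on_punctured_disk_of_avoiding_two_holomorphic_functions
    (𝓕 : Set (ℂ → OnePoint ℂ))
    (h𝓕 : ∀ f ∈ 𝓕, SphMeromorphicOn f (ball (0 : ℂ) 1))
    (a b : ℂ → ℂ)
    (ha : DifferentiableOn ℂ a (ball (0 : ℂ) 1))
    (hb : DifferentiableOn ℂ b (ball (0 : ℂ) 1))
    (hab : ¬ Set.EqOn a b (ball (0 : ℂ) 1))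
    (havoid : ∀ f ∈ 𝓕, ∀ z ∈ ball (0 : ℂ) 1,
      f z ≠ ((a z : ℂ) : OnePoint ℂ) ∧ f z ≠ ((b z : ℂ) : OnePoint ℂ))
    (hnorm : SphNormalOn 𝓕 (ball (0 : ℂ) 1 \ {0})) :
    SphNormalOn 𝓕 (ball (0 : ℂ) 1) :=
  sphNormalOn_of_sphNormalOn_diff_singleton isOpen_ball (isPreconnected_ball_diff_center 0 1)
    (mem_ball_self one_pos) h𝓕 (ha.analyticOnNhd isOpen_ball) (hb.analyticOnNhd isOpen_ball) hab
    havoid hnorm
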